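/- For positions i, j in X^{p-1} lying in different (p-1)-segments with i < j, every suffix of the (p-1)-segment of i is strictly ≺_p-smaller than every suffix of the (p-1)-segment of j; in particular, if q < b for a (p-1)-segment [b,e], the p-prefix of X^{p-1}[q] is strictly lexicographically smaller than the p-prefix of any suffix in X^{p-1}[b..e]. -/
import Mathlib


open scoped Classical

/-- Symbol type for suffixes: ranked sentinels (ordered by (suffix length, string index))
below all regular alphabet symbols. -/
abbrev SSym (A : Type*) := (ℕ ×ₗ ℕ) ⊕ₗ A

variable {A : Type*} [LinearOrder A] {m k : ℕ}

/-- `symAt s (q, l) t` is the `t`-th symbol (0-indexed) of the `l`-suffix of the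
string `s q` (a string of length `k`), padded beyond its end with its own ranked sentinel. -/
def symAt (s : Fin m → Fin k → A) (o : Fin m × Fin (k+1)) (t : ℕ) : SSym A :=
  if _h : t < (o.2 : ℕ) then
    toLex (Sum.inr (s o.1 ⟨k - (o.2 : ℕ) + t, by have := o.2.isLt; omega⟩))
  else
    toLex (Sum.inl (toLex ((o.2 : ℕ), (o.1 : ℕ))))

/-- The `p`-prefix of the suffix occurrence `o`. -/
def pprefix (s : Fin m → Fin k → A) (p : ℕ) (o : Fin m × Fin (k+1)) : List (SSym A) :=
  List.ofFn fun t : Fin p => symAt s o t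

/-- The full suffix string of occurrence `o` (its `l` symbols followed by its sentinel). -/
def suffStr (s : Fin m → Fin k → A) (o : Fin m × Fin (k+1)) : List (SSym A) :=
  List.ofFn fun t : Fin ((o.2 : ℕ) + 1) => symAt s o t

/-- The order `≺_p`: compare `p`-prefixes lexicographically, then suffix lengths,
then string indices. -/
def precP (s : Fin m → Fin k → A) (p : ℕ) (α β : Fin m × Fin (k+1)) : Prop :=
  List.Lex (· < ·) (pprefix s p α) (pprefix s p β) ∨
    (pprefix s p α = pprefix s p β ∧
      ((α.2 : ℕ) < (β.2 : ℕ) ∨ ((α.2 : ℕ) = (β.2 : ℕ) ∧ (α.1 : ℕ) < (β.1 : ℕ))))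

/-- Full lexicographic order on suffix occurrences, ties broken by length then string index. -/
def fullOrd (s : Fin m → Fin k → A) (α β : Fin m × Fin (k+1)) : Prop :=
  List.Lex (· < ·) (suffStr s α) (suffStr s β) ∨
    (suffStr s α = suffStr s β ∧
      ((α.2 : ℕ) < (β.2 : ℕ) ∨ ((α.2 : ℕ) = (β.2 : ℕ) ∧ (α.1 : ℕ) < (β.1 : ℕ))))

/-- `[b,e]` is the `p`-segment of position `i` in the sorted array `X`:
a position `j` carries the same `p`-prefix as position `i` iff `b ≤ j ≤ e`. -/
def isSeg (s : Fin m → Fin k → A) (p : ℕ) {n : ℕ}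
    (X : Fin n → Fin m × Fin (k+1)) (b e i : Fin n) : Prop :=
  b ≤ i ∧ i ≤ e ∧ ∀ j, (pprefix s p (X j) = pprefix s p (X i) ↔ b ≤ j ∧ j ≤ e)

/-- Position `i` is the start of its `p`-segment in the sorted array `X`. -/
def isStart (s : Fin m → Fin k → A) (p : ℕ) {n : ℕ}
    (X : Fin n → Fin m × Fin (k+1)) (i : Fin n) : Prop :=
  ∀ j, j < i → pprefix s p (X j) ≠ pprefix s p (X i)


lemma lex_append_of_length_eq {α : Type*} {r : α → α → Prop}
    {l₁ l₂ : List α} (h : List.Lex r l₁ l₂) (hlen : l₁.length = l₂.length)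
    (s₁ s₂ : List α) : List.Lex r (l₁ ++ s₁) (l₂ ++ s₂) := by
  induction h with
  | nil => simp at hlen
  | cons h ih => exact List.Lex.cons (ih (by simpa using hlen))
  | rel h => exact List.Lex.rel h

lemma pprefix_succ (s : Fin m → Fin k → A) (p : ℕ) (o : Fin m × Fin (k+1)) :
    pprefix s (p+1) o = pprefix s p o ++ [symAt s o p] := by
  unfold pprefix
  rw [List.ofFn_succ']
  simp [List.concat_eq_append, Fin.coe_castSucc, Fin.val_last]

lemma pprefix_length (s : Fin m → Fin k → A) (p : ℕ) (o : Fin m × Fin (k+1)) :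
    (pprefix s p o).length = p := by simp [pprefix]

lemma lex_succ_of_precP_ne (s : Fin m → Fin k → A) (p : ℕ)
    {α β : Fin m × Fin (k+1)} (h : precP s p α β)
    (hne : pprefix s p α ≠ pprefix s p β) :
    List.Lex (· < ·) (pprefix s (p+1) α) (pprefix s (p+1) β) := by
  rcases h with h | ⟨heq, _⟩
  · rw [pprefix_succ, pprefix_succ]
    exact lex_append_of_length_eq h (by simp [pprefix_length]) _ _
  · exact absurd heq hne

/-- For positions in different `(p-1)`-segments of `X^{p-1}`, with the
first segment `[b,e]` entirely before the second `[b',e']`, every suffix of the first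
segment is strictly `≺_p`-smaller than every suffix of the second; in particular, if
`q < b` for a `(p-1)`-segment `[b,e]`, then the `p`-prefix of `X^{p-1} q` is strictly
lexicographically smaller than the `p`-prefix of any suffix in `X^{p-1}[b..e]`. -/
theorem segments_strictly_ordered (s : Fin m → Fin k → A) (p : ℕ) (hp : 1 ≤ p)
    (Xprev : Fin ((k + 1) * m) → Fin m × Fin (k + 1))
    (hbij : Function.Bijective Xprev)
    (hsort : ∀ i j, i < j → precP s (p - 1) (Xprev i) (Xprev j))
    (b e b' e' : Fin ((k + 1) * m))
    (hseg1 : isSeg s (p - 1) Xprev b e b) (hseg2 : isSeg s (p - 1) Xprev b' e' b')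
    (hlt : e < b') :
    (∀ u v, b ≤ u → u ≤ e → b' ≤ v → v ≤ e' → precP s p (Xprev u) (Xprev v)) ∧
    (∀ q j, q < b → b ≤ j → j ≤ e →
      List.Lex (· < ·) (pprefix s p (Xprev q)) (pprefix s p (Xprev j))) := by
  obtain ⟨p', rfl⟩ : ∃ p', p = p' + 1 := ⟨p - 1, by omega⟩
  simp only [Nat.add_sub_cancel] at hsort hseg1 hseg2
  obtain ⟨-, hbe, hmem1⟩ := hseg1
  constructor
  · intro u v hbu hue hbv hve
    have huv : u < v := lt_of_le_of_lt hue (lt_of_lt_of_le hlt hbv)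
    have hne : pprefix s p' (Xprev u) ≠ pprefix s p' (Xprev v) := by
      intro h
      have hu : pprefix s p' (Xprev u) = pprefix s p' (Xprev b) :=
        (hmem1 u).mpr ⟨hbu, hue⟩
      have := (hmem1 v).mp (h ▸ hu)
      exact absurd this.2 (not_le.mpr (lt_of_lt_of_le hlt hbv))
    exact Or.inl (lex_succ_of_precP_ne s p' (hsort u v huv) hne)
  · intro q j hq hbj hje
    have hqj : q < j := lt_of_lt_of_le hq hbj
    have hne : pprefix s p' (Xprev q) ≠ pprefix s p' (Xprev j) := by
      intro h
      have hj : pprefix s p' (Xprev j) = pprefix s p' (Xprev b) :=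
        (hmem1 j).mpr ⟨hbj, hje⟩
      have := (hmem1 q).mp (h ▸ hj)
      exact absurd this.1 (not_le.mpr hq)
    exact lex_succ_of_precP_ne s p' (hsort q j hqj) hne
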